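/- For n ≥ 2, the number of parking functions of size n whose parking permutation avoids all of 123, 132, 231, 312 equals n + 1. -/

import Mathlib

open Finset

noncomputable section

/-- The parking process over the first `k` cars (cars are `0,...,k-1`, i.e. cars `1,...,k`
in 1-indexed terms): returns `some occ` where `occ` maps each spot to the car parked there
(`none` meaning empty), or `none` if some car failed to park.  Car `c` drives to its
preferred spot `f c` and parks at the first free spot with index `≥ f c`, failing if
no such spot exists. -/
def parkAux {n : ℕ} (f : Fin n → Fin n) : ℕ → Option (Fin n → Option (Fin n))
  | 0 => some fun _ => none
  | k + 1 =>
    (parkAux f k).bind fun occ =>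
      if h : k < n then
        if hS : (Finset.univ.filter fun s => f ⟨k, h⟩ ≤ s ∧ occ s = none).Nonempty then
          some (Function.update occ
            ((Finset.univ.filter fun s => f ⟨k, h⟩ ≤ s ∧ occ s = none).min' hS)
            (some ⟨k, h⟩))
        else none
      else some occ

/-- All `n` cars park successfully. -/
def AllPark {n : ℕ} (f : Fin n → Fin n) : Prop := (parkAux f n).isSome

/-- `f` is a parking function: for every `i ∈ [n]`, at least `i` cars prefer
the first `i` spots.  (Here `i : Fin n` denotes the `(i+1)`-st spot, 0-indexed.) -/
def IsParkingFunction {n : ℕ} (f : Fin n → Fin n) : Prop :=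
  ∀ i : Fin n, i.val + 1 ≤ (Finset.univ.filter fun j => f j ≤ i).card

/-- `ρ` is the parking permutation of `f`: after all cars have parked,
spot `i` is occupied by car `ρ i`. -/
def IsParkingPerm {n : ℕ} (f : Fin n → Fin n) (ρ : Equiv.Perm (Fin n)) : Prop :=
  parkAux f n = some fun i => some (ρ i)

/-- `π` contains `σ` as a pattern. -/
def ContainsPattern {n m : ℕ} (π : Equiv.Perm (Fin n)) (σ : Equiv.Perm (Fin m)) : Prop :=
  ∃ g : Fin m → Fin n, StrictMono g ∧ ∀ a b : Fin m, σ a < σ b ↔ π (g a) < π (g b)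

/-- `ρ` avoids every pattern in the list `pats`. -/
def AvoidsAll {n : ℕ} (ρ : Equiv.Perm (Fin n)) (pats : List (Equiv.Perm (Fin 3))) : Prop :=
  ∀ σ ∈ pats, ¬ ContainsPattern ρ σ

/-- The number of parking functions of size `n` whose parking permutation avoids
all patterns in `pats`. -/
def pk (n : ℕ) (pats : List (Equiv.Perm (Fin 3))) : ℕ :=
  Nat.card {f : Fin n → Fin n // IsParkingFunction f ∧
    ∃ ρ : Equiv.Perm (Fin n), IsParkingPerm f ρ ∧ AvoidsAll ρ pats}

def p123 : Equiv.Perm (Fin 3) := Equiv.ofBijective ![0, 1, 2] (by decide)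
def p132 : Equiv.Perm (Fin 3) := Equiv.ofBijective ![0, 2, 1] (by decide)
def p213 : Equiv.Perm (Fin 3) := Equiv.ofBijective ![1, 0, 2] (by decide)
def p231 : Equiv.Perm (Fin 3) := Equiv.ofBijective ![1, 2, 0] (by decide)
def p312 : Equiv.Perm (Fin 3) := Equiv.ofBijective ![2, 0, 1] (by decide)
def p321 : Equiv.Perm (Fin 3) := Equiv.ofBijective ![2, 1, 0] (by decide)


/-!
A car parks in spot `ρ⁻¹ c` exactly when its preference `s` satisfies `s ≤ ρ⁻¹ c` and every spot
in `[s, ρ⁻¹ c)` is held by an earlier car. Hence the functions with parking permutation `ρ` are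
the product of these preference sets, and each of them is a parking function.

A permutation avoiding 123, 132 and 231 decreases on its first `n - 1` entries (an ascent there,
together with the last entry, would form one of these patterns), and avoiding 312 as well forces
the last entry to be `1` or `n`. So the only avoiders are `n ⋯ 2 1`, the parking permutation of
the single function `c ↦ n - 1 - c`, and `(n-1) ⋯ 1 n`, for which the preferences of the first
`n - 1` cars are forced while the last car may prefer any of the `n` spots.
-/

open Equiv

section

variable {n : ℕ}

def occupancyAfter (ρ : Perm (Fin n)) (k : ℕ) (s : Fin n) : Option (Fin n) :=
  if (ρ s).val < k then some (ρ s) else none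

lemma occupancyAfter_eq_none_iff {ρ : Perm (Fin n)} {k : ℕ} {s : Fin n} :
    occupancyAfter ρ k s = none ↔ k ≤ (ρ s).val := by
  simp [occupancyAfter]

lemma update_occupancyAfter (ρ : Perm (Fin n)) (c : Fin n) :
    Function.update (occupancyAfter ρ c.val) (ρ.symm c) (some c) =
      occupancyAfter ρ (c.val + 1) := by
  funext s
  rcases eq_or_ne s (ρ.symm c) with rfl | hs
  · simp [occupancyAfter]
  · have hρs : (ρ s).val ≠ c.val := fun h => hs (ρ.eq_symm_apply.mpr (Fin.ext h))
    simp only [Function.update_of_ne hs, occupancyAfter]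
    split_ifs <;> first | rfl | omega

/-- The preferences that send car `c` to spot `ρ⁻¹ c` when the earlier cars already stand
where `ρ` puts them. -/
def admissiblePrefs (ρ : Perm (Fin n)) (c : Fin n) : Finset (Fin n) :=
  Finset.univ.filter fun s => s ≤ ρ.symm c ∧ ∀ t, s ≤ t → t < ρ.symm c → ρ t < c

lemma mem_admissiblePrefs_iff_isLeast {ρ : Perm (Fin n)} {a c : Fin n} :
    a ∈ admissiblePrefs ρ c ↔
      IsLeast {s | a ≤ s ∧ occupancyAfter ρ c.val s = none} (ρ.symm c) := by
  simp only [admissiblePrefs, Finset.mem_filter, Finset.mem_univ, true_and, IsLeast,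
    lowerBounds, Set.mem_ofPred_eq, occupancyAfter_eq_none_iff, apply_symm_apply, le_refl, and_true,
    and_imp, ← Fin.le_def]
  refine and_congr_right fun _ => forall_congr' fun t => ?_
  constructor
  · intro h hat hct
    by_contra hlt
    exact (h hat (not_le.mp hlt)).not_ge hct
  · intro h hat htp
    by_contra hct
    exact (h hat (not_lt.mp hct)).not_gt htp

lemma occupancyAfter_eq_of_update_eq {ρ : Perm (Fin n)} {c x : Fin n}
    {occ : Fin n → Option (Fin n)} (hx : occ x = none)
    (h : Function.update occ x (some c) = occupancyAfter ρ (c.val + 1)) :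
    x = ρ.symm c ∧ occ = occupancyAfter ρ c.val := by
  have hρx : ρ x = c := by
    have hx' := congrFun h x
    simp only [Function.update_self, occupancyAfter] at hx'
    split_ifs at hx'
    exact (Option.some_injective _ hx').symm
  refine ⟨ρ.eq_symm_apply.mpr hρx, ?_⟩
  rw [← update_occupancyAfter, ← ρ.eq_symm_apply.mpr hρx] at h
  funext s
  rcases eq_or_ne s x with rfl | hs
  · rw [hx, eq_comm, occupancyAfter_eq_none_iff, hρx]
  · simpa [Function.update_of_ne hs] using congrFun h s

lemma parkAux_succ_eq_occupancyAfter_iff (f : Fin n → Fin n) (ρ : Perm (Fin n)) {k : ℕ}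
    (hk : k < n) :
    parkAux f (k + 1) = some (occupancyAfter ρ (k + 1)) ↔
      parkAux f k = some (occupancyAfter ρ k) ∧ f ⟨k, hk⟩ ∈ admissiblePrefs ρ ⟨k, hk⟩ := by
  set c : Fin n := ⟨k, hk⟩
  rw [parkAux]
  cases parkAux f k with
  | none => simp
  | some occ =>
    simp only [Option.bind_some, dif_pos hk, Option.some_inj]
    set S := Finset.univ.filter fun s => f c ≤ s ∧ occ s = none
    constructor
    · intro h
      split_ifs at h with hS
      obtain ⟨hmin, hocc⟩ := occupancyAfter_eq_of_update_eq
        (Finset.mem_filter.mp (S.min'_mem hS)).2.2 (Option.some.inj h)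
      subst hocc
      refine ⟨rfl, mem_admissiblePrefs_iff_isLeast.mpr ?_⟩
      rw [← hmin]
      simpa [S] using S.isLeast_min' hS
    · rintro ⟨rfl, hc⟩
      have hleast := mem_admissiblePrefs_iff_isLeast.mp hc
      have hS : S.Nonempty := ⟨_, by simpa [S] using hleast.1⟩
      rw [dif_pos hS, (S.isLeast_min' hS).unique (by simpa [S] using hleast)]
      exact congrArg some (update_occupancyAfter ρ c)

lemma parkAux_eq_occupancyAfter_iff (f : Fin n → Fin n) (ρ : Perm (Fin n)) :
    ∀ k ≤ n, parkAux f k = some (occupancyAfter ρ k) ↔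
      ∀ c : Fin n, c.val < k → f c ∈ admissiblePrefs ρ c
  | 0, _ => by
    simp only [parkAux, Option.some_inj, Nat.not_lt_zero, false_imp_iff, implies_true,
      iff_true]
    funext s
    simp [occupancyAfter]
  | k + 1, hk => by
    rw [parkAux_succ_eq_occupancyAfter_iff f ρ hk,
      parkAux_eq_occupancyAfter_iff f ρ k (by omega)]
    constructor
    · rintro ⟨hlt, hlast⟩ c hc
      rcases Nat.lt_succ_iff_lt_or_eq.mp hc with hc | hc
      · exact hlt c hc
      · rwa [show c = ⟨k, by omega⟩ from Fin.ext hc]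
    · intro h
      exact ⟨fun c hc => h c (by omega), h _ (Nat.lt_succ_self k)⟩

theorem isParkingPerm_iff {f : Fin n → Fin n} {ρ : Perm (Fin n)} :
    IsParkingPerm f ρ ↔ ∀ c, f c ∈ admissiblePrefs ρ c := by
  have hfull : occupancyAfter ρ n = fun i => some (ρ i) := by
    funext i
    simp [occupancyAfter]
  rw [IsParkingPerm, ← hfull, parkAux_eq_occupancyAfter_iff f ρ n le_rfl]
  simp

lemma le_symm_apply_of_mem_admissiblePrefs {ρ : Perm (Fin n)} {a c : Fin n}
    (h : a ∈ admissiblePrefs ρ c) : a ≤ ρ.symm c :=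
  (Finset.mem_filter.mp h).2.1

theorem IsParkingPerm.isParkingFunction {f : Fin n → Fin n} {ρ : Perm (Fin n)}
    (h : IsParkingPerm f ρ) : IsParkingFunction f := by
  intro i
  have hsub : (Finset.Iic i).map ρ.toEmbedding ⊆ Finset.univ.filter fun j => f j ≤ i := by
    intro c hc
    obtain ⟨s, hs, rfl⟩ := Finset.mem_map.mp hc
    have hpref := le_symm_apply_of_mem_admissiblePrefs (isParkingPerm_iff.mp h (ρ s))
    rw [symm_apply_apply] at hpref
    simp only [Finset.mem_filter, Finset.mem_univ, true_and]
    exact hpref.trans (Finset.mem_Iic.mp hs)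
  simpa [Fin.card_Iic] using Finset.card_le_card hsub

lemma IsParkingPerm.unique {f : Fin n → Fin n} {ρ ρ' : Perm (Fin n)}
    (h : IsParkingPerm f ρ) (h' : IsParkingPerm f ρ') : ρ = ρ' := by
  rw [IsParkingPerm, h', Option.some_inj] at h
  exact Equiv.ext fun i => (Option.some_injective _ (congrFun h i)).symm

theorem card_isParkingPerm (ρ : Perm (Fin n)) :
    Nat.card {f : Fin n → Fin n // IsParkingPerm f ρ} = ∏ c, #(admissiblePrefs ρ c) := by
  rw [← Fintype.card_piFinset, ← Nat.card_eq_finsetCard]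
  exact Nat.card_congr (Equiv.subtypeEquivRight fun f => by
    rw [isParkingPerm_iff, Fintype.mem_piFinset])

lemma admissiblePrefs_eq_singleton {ρ : Perm (Fin n)} {c : Fin n}
    (h : ∀ t : Fin n, t.val + 1 = (ρ.symm c).val → c < ρ t) :
    admissiblePrefs ρ c = {ρ.symm c} := by
  ext a
  simp only [admissiblePrefs, Finset.mem_filter, Finset.mem_univ, true_and,
    Finset.mem_singleton]
  constructor
  · rintro ⟨hap, hocc⟩
    by_contra hne
    have hlt := Fin.lt_def.mp (lt_of_le_of_ne hap hne)
    let t : Fin n := ⟨(ρ.symm c).val - 1, by omega⟩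
    have hat : a ≤ t := Fin.le_def.mpr (by simp only [t]; omega)
    have htp : t < ρ.symm c := Fin.lt_def.mpr (by simp only [t]; omega)
    exact (h t (by simp only [t]; omega)).not_gt (hocc t hat htp)
  · rintro rfl
    exact ⟨le_rfl, fun t h1 h2 => absurd h2 (not_lt.mpr h1)⟩

lemma admissiblePrefs_eq_Iic {ρ : Perm (Fin n)} {c : Fin n}
    (h : ∀ t < ρ.symm c, ρ t < c) :
    admissiblePrefs ρ c = Finset.Iic (ρ.symm c) := by
  ext a
  simp only [admissiblePrefs, Finset.mem_filter, Finset.mem_univ, true_and, Finset.mem_Iic,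
    and_iff_left_iff_imp]
  exact fun _ t _ ht => h t ht

section Patterns

variable {π : Perm (Fin n)} {σ : Perm (Fin 3)}

lemma containsPattern_of_triple {a b c : Fin n} (hab : a < b) (hbc : b < c)
    (h : ∀ x y, σ x < σ y ↔ π (![a, b, c] x) < π (![a, b, c] y)) : ContainsPattern π σ := by
  refine ⟨![a, b, c], Fin.strictMono_iff_lt_succ.mpr fun i => ?_, h⟩
  fin_cases i
  exacts [hab, hbc]

lemma ContainsPattern.strictAnti (h : ContainsPattern π σ) (hπ : StrictAnti π) :
    StrictAnti σ := by
  obtain ⟨g, hg, hord⟩ := h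
  exact fun a b hab => (hord b a).mpr (hπ (hg hab))

lemma ContainsPattern.apply_one_lt_apply_zero (h : ContainsPattern π σ)
    (hπ : StrictAntiOn π {i | i.val + 1 < n}) : σ 1 < σ 0 := by
  obtain ⟨g, hg, hord⟩ := h
  have h01 := hg (show (0 : Fin 3) < 1 by decide)
  have h12 := hg (show (1 : Fin 3) < 2 by decide)
  have h2 := (g 2).isLt
  exact (hord 1 0).mpr
    (hπ (show (g 0).val + 1 < n by omega) (show (g 1).val + 1 < n by omega) h01)

end Patterns

def revButLast (n : ℕ) : Perm (Fin n) :=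
  Function.Involutive.toPerm (fun i => if i.val + 1 = n then i else ⟨n - 2 - i.val, by omega⟩)
    fun i => by
      dsimp only
      split_ifs <;> ext <;> simp only at * <;> omega

lemma val_revButLast (i : Fin n) :
    (revButLast n i).val = if i.val + 1 = n then i.val else n - 2 - i.val := by
  show (if i.val + 1 = n then i else ⟨n - 2 - i.val, by omega⟩ : Fin n).val = _
  split_ifs <;> rfl

@[simp]
lemma revButLast_symm : (revButLast n).symm = revButLast n :=
  Function.Involutive.toPerm_symm _

lemma strictAntiOn_revButLast : StrictAntiOn (revButLast n) {i | i.val + 1 < n} := by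
  intro i hi j hj hij
  simp only [Set.mem_ofPred_eq] at hi hj
  rw [Fin.lt_def, val_revButLast, val_revButLast, if_neg (by omega), if_neg (by omega)]
  omega

lemma revPerm_ne_revButLast (hn : 2 ≤ n) : (Fin.revPerm : Perm (Fin n)) ≠ revButLast n := by
  intro h
  have := congrArg Fin.val (DFunLike.congr_fun h ⟨n - 1, by omega⟩)
  rw [Fin.revPerm_apply, Fin.val_rev, val_revButLast, if_pos (by simp only; omega)] at this
  simp only at this
  omega

lemma avoidsAll_revPerm : AvoidsAll (Fin.revPerm : Perm (Fin n)) [p123, p132, p231, p312] := by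
  intro σ hσ h
  have hσ_anti := h.strictAnti Fin.rev_strictAnti
  simp only [List.mem_cons, List.not_mem_nil, or_false] at hσ
  revert hσ_anti
  unfold StrictAnti
  rcases hσ with rfl | rfl | rfl | rfl <;> decide

lemma not_containsPattern_revButLast_p312 : ¬ContainsPattern (revButLast n) p312 := by
  rintro ⟨g, hg, hord⟩
  have h01 := hg (show (0 : Fin 3) < 1 by decide)
  have h12 := hg (show (1 : Fin 3) < 2 by decide)
  have h2 := (g 2).isLt
  have hlt : revButLast n (g 1) < revButLast n (g 2) := (hord 1 2).mp (by decide)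
  have hnlt : ¬revButLast n (g 0) < revButLast n (g 2) :=
    fun h => absurd ((hord 0 2).mpr h) (by decide)
  rw [Fin.lt_def, val_revButLast, val_revButLast] at hlt hnlt
  split_ifs at hlt hnlt <;> omega

lemma avoidsAll_revButLast : AvoidsAll (revButLast n) [p123, p132, p231, p312] := by
  intro σ hσ h
  simp only [List.mem_cons, List.not_mem_nil, or_false] at hσ
  rcases hσ with rfl | rfl | rfl | rfl
  iterate 3 exact absurd (h.apply_one_lt_apply_zero strictAntiOn_revButLast) (by decide)
  exact not_containsPattern_revButLast_p312 h

section Avoiders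

variable {ρ : Perm (Fin n)}

lemma strictAntiOn_of_avoids (h123 : ¬ContainsPattern ρ p123) (h132 : ¬ContainsPattern ρ p132)
    (h231 : ¬ContainsPattern ρ p231) : StrictAntiOn ρ {i | i.val + 1 < n} := by
  intro i _ j hj hij
  simp only [Set.mem_ofPred_eq] at hj
  by_contra hle
  have hlt : ρ i < ρ j := lt_of_le_of_ne (not_lt.mp hle) (ρ.injective.ne hij.ne)
  let L : Fin n := ⟨n - 1, by omega⟩
  have hjL : j < L := Fin.lt_def.mpr (by simp only [L]; omega)
  have hiL : ρ i ≠ ρ L := ρ.injective.ne (hij.trans hjL).ne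
  have hjL' : ρ j ≠ ρ L := ρ.injective.ne hjL.ne
  rcases lt_or_gt_of_ne hiL with hiL | hiL
  · rcases lt_or_gt_of_ne hjL' with hjL' | hjL'
    · exact h123 (containsPattern_of_triple hij hjL fun x y => by
        fin_cases x <;> fin_cases y <;> simp [p123] <;> order)
    · exact h132 (containsPattern_of_triple hij hjL fun x y => by
        fin_cases x <;> fin_cases y <;> simp [p132] <;> order)
  · exact h231 (containsPattern_of_triple hij hjL fun x y => by
      fin_cases x <;> fin_cases y <;> simp [p231] <;> order)

lemma val_apply_last_of_avoids (hanti : StrictAntiOn ρ {i | i.val + 1 < n})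
    (h312 : ¬ContainsPattern ρ p312) {L : Fin n} (hL : L.val + 1 = n) :
    (ρ L).val = 0 ∨ (ρ L).val + 1 = n := by
  by_contra! h
  let i := ρ.symm ⟨0, by omega⟩
  let j := ρ.symm ⟨n - 1, by omega⟩
  have hi : ρ i = ⟨0, by omega⟩ := ρ.apply_symm_apply _
  have hj : ρ j = ⟨n - 1, by omega⟩ := ρ.apply_symm_apply _
  have hiL : i < L := lt_of_le_of_ne (Fin.le_def.mpr (by omega))
    fun hiL => h.1 (by rw [← hiL, hi])
  have hjL : j < L := lt_of_le_of_ne (Fin.le_def.mpr (by omega))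
    fun hjL => h.2 (by rw [← hjL, hj]; simp only; omega)
  have hij : i ≠ j := ρ.symm.injective.ne (by simp only [ne_eq, Fin.mk.injEq]; omega)
  rcases lt_or_gt_of_ne hij with hij | hji
  · have := hanti (show i.val + 1 < n by omega) (show j.val + 1 < n by omega) hij
    rw [hi, hj, Fin.lt_def] at this
    simp only at this
    omega
  · have hρL : ρ i < ρ L ∧ ρ L < ρ j := by
      rw [hi, hj, Fin.lt_def, Fin.lt_def]
      simp only
      omega
    exact h312 (containsPattern_of_triple hji hiL fun x y => by
      fin_cases x <;> fin_cases y <;> simp [p312] <;> order)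

lemma eq_symm_of_strictMono_comp {τ : Perm (Fin n)} (h : StrictMono (ρ ∘ τ)) : ρ = τ.symm :=
  Equiv.ext fun x => by simpa using congrFun h.eq_id (τ.symm x)

lemma eq_revPerm_of_strictAntiOn (hanti : StrictAntiOn ρ {i | i.val + 1 < n}) {L : Fin n}
    (hL : L.val + 1 = n) (hρL : (ρ L).val = 0) : ρ = Fin.revPerm := by
  have hstrict : StrictAnti ρ := by
    intro i j hij
    by_cases hj : j.val + 1 < n
    · exact hanti (show i.val + 1 < n by omega) hj hij
    · obtain rfl : L = j := Fin.ext (by omega)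
      exact lt_of_le_of_ne (Fin.le_def.mpr (by omega)) (ρ.injective.ne hij.ne')
  have hrev : StrictAnti (Fin.revPerm : Perm (Fin n)) := Fin.rev_strictAnti
  rw [eq_symm_of_strictMono_comp (hstrict.comp hrev), Fin.revPerm_symm]

lemma eq_revButLast_of_strictAntiOn (hanti : StrictAntiOn ρ {i | i.val + 1 < n}) {L : Fin n}
    (hL : L.val + 1 = n) (hρL : (ρ L).val + 1 = n) : ρ = revButLast n := by
  have hmono : StrictMono (ρ ∘ revButLast n) := by
    intro i j hij
    simp only [Function.comp_apply]
    by_cases hj : j.val + 1 < n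
    · apply hanti <;> simp only [Set.mem_ofPred_eq, Fin.lt_def, val_revButLast] <;>
        split_ifs <;> omega
    · obtain rfl : L = j := Fin.ext (by omega)
      have hfix : revButLast n L = L := Fin.ext (by rw [val_revButLast, if_pos hL])
      rw [hfix]
      refine lt_of_le_of_ne (Fin.le_def.mpr (by omega)) (ρ.injective.ne fun h => ?_)
      rw [← hfix, (revButLast n).injective.eq_iff] at h
      exact hij.ne h
  rw [eq_symm_of_strictMono_comp hmono, revButLast_symm]

theorem avoidsAll_iff :
    AvoidsAll ρ [p123, p132, p231, p312] ↔ ρ = Fin.revPerm ∨ ρ = revButLast n := by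
  refine ⟨fun h => ?_, ?_⟩
  · rcases Nat.eq_zero_or_pos n with rfl | hn
    · exact Or.inl (Subsingleton.elim _ _)
    have hanti := strictAntiOn_of_avoids (h _ (by simp)) (h _ (by simp)) (h _ (by simp))
    have hL : (⟨n - 1, by omega⟩ : Fin n).val + 1 = n := by simp only; omega
    rcases val_apply_last_of_avoids hanti (h _ (by simp)) hL with h0 | hlast
    exacts [Or.inl (eq_revPerm_of_strictAntiOn hanti hL h0),
      Or.inr (eq_revButLast_of_strictAntiOn hanti hL hlast)]
  · rintro (rfl | rfl)
    exacts [avoidsAll_revPerm, avoidsAll_revButLast]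

end Avoiders

lemma card_isParkingPerm_revPerm :
    Nat.card {f : Fin n → Fin n // IsParkingPerm f Fin.revPerm} = 1 := by
  rw [card_isParkingPerm]
  refine Finset.prod_eq_one fun c _ => ?_
  rw [admissiblePrefs_eq_singleton, Finset.card_singleton]
  intro t ht
  simp only [Fin.revPerm_symm, Fin.revPerm_apply, Fin.val_rev, Fin.lt_def] at ht ⊢
  omega

lemma card_isParkingPerm_revButLast (hn : 0 < n) :
    Nat.card {f : Fin n → Fin n // IsParkingPerm f (revButLast n)} = n := by
  let L : Fin n := ⟨n - 1, by omega⟩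
  have hL : revButLast n L = L :=
    Fin.ext (by rw [val_revButLast, if_pos (by simp only [L]; omega)])
  rw [card_isParkingPerm, Fintype.prod_eq_single L]
  · rw [admissiblePrefs_eq_Iic, revButLast_symm, hL, Fin.card_Iic]
    · simp only [L]
      omega
    · intro t ht
      rw [revButLast_symm, hL] at ht
      simp only [Fin.lt_def, val_revButLast] at ht ⊢
      split_ifs <;> simp only [L] at * <;> omega
  · intro c hc
    have hc' : c.val + 1 ≠ n := fun h => hc (Fin.ext (by simp only [L]; omega))
    rw [admissiblePrefs_eq_singleton, Finset.card_singleton]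
    intro t ht
    simp only [revButLast_symm, Fin.lt_def, val_revButLast] at ht ⊢
    split_ifs at ht ⊢ <;> omega

end

theorem stmt4 (n : ℕ) (hn : 2 ≤ n) :
    pk n [p123, p132, p231, p312] = n + 1 := by
  classical
  have hchar : ∀ f : Fin n → Fin n, (IsParkingFunction f ∧ ∃ ρ : Perm (Fin n),
      IsParkingPerm f ρ ∧ AvoidsAll ρ [p123, p132, p231, p312]) ↔
        IsParkingPerm f Fin.revPerm ∨ IsParkingPerm f (revButLast n) := by
    intro f
    simp only [avoidsAll_iff]
    constructor
    · rintro ⟨-, ρ, hρ, rfl | rfl⟩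
      exacts [Or.inl hρ, Or.inr hρ]
    · rintro (h | h)
      exacts [⟨h.isParkingFunction, _, h, Or.inl rfl⟩,
        ⟨h.isParkingFunction, _, h, Or.inr rfl⟩]
  have hdisj : Disjoint (IsParkingPerm · Fin.revPerm) (IsParkingPerm · (revButLast n)) := by
    simp only [Pi.disjoint_iff, Prop.disjoint_iff, not_and]
    exact fun f h h' => revPerm_ne_revButLast hn (h.unique h')
  rw [pk, Nat.card_congr ((Equiv.subtypeEquivRight hchar).trans (subtypeOrEquiv _ _ hdisj)),
    Nat.card_sum, card_isParkingPerm_revPerm, card_isParkingPerm_revButLast (by omega), add_comm]
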